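/- arXiv:2603.17286 — 4 statements merged into one kernel-verified Lean document; each statement's English description precedes it below -/
import Mathlib

section
/- For 1 ≤ ι ≤ n − 1, the number of I-reduced matrices in GL_n(𝔽_q) for I = {ι} whose entries are all 0 or 1 and with at most two nonzero entries per column equals the coefficient of z^ι in the power series expansion of ∏_{i=1}^{n−ι+1} 1/(1 − i z); equivalently it equals the sum over all tuples (t₁,…,t_{n−ι+1}) of nonnegative integers with t₁ + ⋯ + t_{n−ι+1} = ι of 1^{t₁}·2^{t₂}·⋯·(n−ι+1)^{t_{n−ι+1}}. -/
/-- `A` is an `I`-reduced matrix: `A` is invertible, in each row the leftmost invertible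
entry is `1` (the "leading 1", located at column `lead i`), all entries above a leading `1`
vanish, and within each block of rows determined by `I` the leading `1`s occur in strictly
increasing column positions. -/
def IsIReduced {R : Type*} [CommRing R] (n : ℕ) (I : Finset ℕ)
    (A : Matrix (Fin n) (Fin n) R) : Prop :=
  IsUnit A.det ∧
  ∃ lead : Fin n → Fin n,
    (∀ i, A i (lead i) = 1) ∧
    (∀ i j, j < lead i → ¬ IsUnit (A i j)) ∧
    (∀ i i' : Fin n, i' < i → A i' (lead i) = 0) ∧
    (∀ i i' : Fin n, i < i' → (∀ ι ∈ I, ((i : ℕ) < ι ↔ (i' : ℕ) < ι)) →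
      lead i < lead i')

/-! The leading ones of such a matrix are placed by a shuffle of the two row blocks: row `j < ι`
has its leading one in column `j + v j`, where `v j` counts the rows of the second block whose
leading one lies further left, and `v` is monotone. Any other one must lie below a leading one of
the first block and to the right of the leading one of its own row, so it sits in column `j + v j`
and in one of those `v j` rows, with at most one such entry per column. Hence the matrices
correspond to pairs `(v, w)` with `w j ∈ {none} ∪ Fin (v j)` and are counted by
`∑_{v monotone} ∏_j (v j + 1)`; recording a monotone `v` by its fibre sizes `t` turns this sum into
`∑_t ∏_i (i + 1) ^ t i`. -/

open Finset

section MonotoneTuples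

noncomputable def monotoneEquivSym (α : Type*) [LinearOrder α] (k : ℕ) :
    {v : Fin k → α // Monotone v} ≃ Sym α k :=
  Equiv.ofBijective (fun v => ⟨List.ofFn v.1, by simp⟩) <| by
    constructor
    · rintro ⟨v, hv⟩ ⟨v', hv'⟩ h
      have hperm : List.Perm (List.ofFn v) (List.ofFn v') :=
        Quotient.exact (congrArg Subtype.val h)
      exact Subtype.ext <| List.ofFn_injective <|
        hperm.eq_of_sortedLE hv.sortedLE_ofFn hv'.sortedLE_ofFn
    · intro s
      set l := (s : Multiset α).sort
      have hl : l.length = k := by simp [l]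
      refine ⟨⟨fun i => l.get (Fin.cast hl.symm i), ?_⟩, Subtype.ext ?_⟩
      · exact (Multiset.pairwise_sort ..).sortedLE.monotone_get.comp
          (Fin.castOrderIso hl.symm).monotone
      · simp only
        rw [← List.ofFn_congr hl l.get, List.ofFn_get, Multiset.sort_eq]
        rfl

lemma prod_comp_eq_prod_pow_count {α M : Type*} [Fintype α] [DecidableEq α] [CommMonoid M]
    {k : ℕ} (f : α → M) (v : Fin k → α) :
    ∏ j, f (v j) = ∏ a, f a ^ (List.ofFn v : Multiset α).count a := by
  rw [← List.prod_ofFn, show (fun j => f (v j)) = f ∘ v from rfl, ← List.map_ofFn,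
    ← Multiset.prod_coe, ← Multiset.map_coe, prod_multiset_map_count]
  exact prod_subset (subset_univ _) fun a _ ha => by
    rw [Multiset.count_eq_zero_of_notMem (by simpa using ha), pow_zero]

theorem sum_monotone_prod_eq_sum_antidiagonalTuple {R : Type*} [CommSemiring R] {N k : ℕ}
    (f : Fin N → R) :
    ∑ v : {v : Fin k → Fin N // Monotone v}, ∏ j, f (v.1 j)
      = ∑ t ∈ Nat.antidiagonalTuple N k, ∏ i, f i ^ t i := by
  rw [← sum_coe_sort (Nat.antidiagonalTuple N k)]
  exact Fintype.sum_equiv ((monotoneEquivSym _ k).trans ((Sym.equivNatSumOfFintype _ k).trans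
    (Equiv.subtypeEquivRight fun t => Nat.mem_antidiagonalTuple.symm))) _ _
    fun v => prod_comp_eq_prod_pow_count f v.1

end MonotoneTuples

section Shuffle

variable {ι m : ℕ}

lemma castAdd_lt_natAdd (j : Fin ι) (k : Fin m) : Fin.castAdd m j < Fin.natAdd ι k := by
  rw [Fin.lt_def, Fin.val_castAdd, Fin.val_natAdd]; omega

lemma blockwise_strictMono_iff {α : Type*} [Preorder α] (f : Fin (ι + m) → α) :
    (∀ i i' : Fin (ι + m), i < i' → (∀ κ ∈ ({ι} : Finset ℕ), ((i : ℕ) < κ ↔ (i' : ℕ) < κ)) →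
      f i < f i') ↔ StrictMono (f ∘ Fin.castAdd m) ∧ StrictMono (f ∘ Fin.natAdd ι) := by
  simp only [mem_singleton, forall_eq]
  refine ⟨fun h => ⟨fun j j' hj => h _ _ hj (by simp), fun k k' hk => h _ _ (by simpa) (by simp)⟩,
    fun ⟨h₁, h₂⟩ i i' hi hblock => ?_⟩
  induction i using Fin.addCases <;> induction i' using Fin.addCases
  · exact h₁ hi
  · simp at hblock
  · exact absurd hi (not_lt.2 (castAdd_lt_natAdd _ _).le)
  · exact h₂ (by simpa using hi)

/- Leading columns of the shuffle in which the leading ones of exactly `v j` rows of the second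
block precede that of row `j` of the first block; row `k` of the second block is then preceded by
the rows `j` with `v j ≤ k`. -/
def firstLead (v : Fin ι → Fin (m + 1)) (j : Fin ι) : Fin (ι + m) :=
  ⟨j + v j, by have := j.isLt; have := (v j).is_le; omega⟩

def secondLead (v : Fin ι → Fin (m + 1)) (k : Fin m) : Fin (ι + m) :=
  ⟨k + #{j | (v j : ℕ) ≤ k}, by
    have := k.isLt; have := (card_filter_le univ fun j => (v j : ℕ) ≤ k).trans_eq (card_fin ι)
    omega⟩

def shuffleLead (v : Fin ι → Fin (m + 1)) : Fin (ι + m) → Fin (ι + m) :=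
  Fin.append (firstLead v) (secondLead v)

variable {v : Fin ι → Fin (m + 1)}

@[simp] lemma shuffleLead_castAdd (j : Fin ι) : shuffleLead v (Fin.castAdd m j) = firstLead v j :=
  Fin.append_left _ _ _

@[simp] lemma shuffleLead_natAdd (k : Fin m) : shuffleLead v (Fin.natAdd ι k) = secondLead v k :=
  Fin.append_right _ _ _

lemma firstLead_strictMono (hv : Monotone v) : StrictMono (firstLead v) := fun j j' h => by
  have : v j ≤ v j' := hv h.le
  rw [Fin.lt_def] at h ⊢; rw [Fin.le_def] at this
  simp only [firstLead]; omega

lemma secondLead_strictMono (v : Fin ι → Fin (m + 1)) : StrictMono (secondLead v) :=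
  fun k k' h => by
    have : #{j | (v j : ℕ) ≤ k} ≤ #{j | (v j : ℕ) ≤ k'} :=
      card_le_card (monotone_filter_right _ fun j _ hj => hj.trans (Fin.le_def.1 h.le))
    rw [Fin.lt_def] at h ⊢
    simp only [secondLead]; omega

lemma lt_card_filter_le_iff (hv : Monotone v) (j : Fin ι) (k : ℕ) :
    (j : ℕ) < #{i | (v i : ℕ) ≤ k} ↔ (v j : ℕ) ≤ k :=
  Tuple.lt_card_le_iff_apply_le_of_monotone fun _ _ h => hv h

lemma secondLead_lt_firstLead_iff (hv : Monotone v) {k : Fin m} {j : Fin ι} :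
    secondLead v k < firstLead v j ↔ (k : ℕ) < v j := by
  have := lt_card_filter_le_iff hv j k
  rw [Fin.lt_def]; simp only [firstLead, secondLead]; omega

lemma firstLead_lt_secondLead_iff (hv : Monotone v) {k : Fin m} {j : Fin ι} :
    firstLead v j < secondLead v k ↔ (v j : ℕ) ≤ k := by
  have := lt_card_filter_le_iff hv j k
  rw [Fin.lt_def]; simp only [firstLead, secondLead]; omega

lemma secondLead_ne_firstLead (hv : Monotone v) (k : Fin m) (j : Fin ι) :
    secondLead v k ≠ firstLead v j := fun h => by
  have h₁ := (secondLead_lt_firstLead_iff hv).not.1 (by rw [h]; exact lt_irrefl _)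
  have h₂ := (firstLead_lt_secondLead_iff hv).not.1 (by rw [h]; exact lt_irrefl _)
  omega

lemma shuffleLead_injective (hv : Monotone v) : Function.Injective (shuffleLead v) := by
  intro r r' h
  induction r using Fin.addCases <;> induction r' using Fin.addCases <;>
    simp only [shuffleLead_castAdd, shuffleLead_natAdd] at h
  · rw [(firstLead_strictMono hv).injective h]
  · exact absurd h.symm (secondLead_ne_firstLead hv _ _)
  · exact absurd h (secondLead_ne_firstLead hv _ _)
  · rw [(secondLead_strictMono v).injective h]

lemma shuffleLead_bijective (hv : Monotone v) : Function.Bijective (shuffleLead v) :=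
  Finite.injective_iff_bijective.1 (shuffleLead_injective hv)

lemma StrictMono.card_filter_lt_apply {a b : ℕ} {f : Fin a → Fin b} (hf : StrictMono f)
    (j : Fin a) : #{j' | f j' < f j} = j := by
  simp only [hf.lt_iff_lt, filter_gt_eq_Iio, Fin.card_Iio]

lemma val_eq_card_castAdd_add_card_natAdd {lead : Fin (ι + m) → Fin (ι + m)}
    (hlead : Function.Bijective lead) (c : Fin (ι + m)) :
    (c : ℕ) = #{j | lead (Fin.castAdd m j) < c} + #{k | lead (Fin.natAdd ι k) < c} := by
  calc (c : ℕ) = #{r | lead r < c} := by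
        rw [← Fin.card_Iio, ← filter_gt_eq_Iio]
        exact (card_bijective lead hlead fun r => by simp).symm
    _ = _ := by rw [card_filter, Fin.sum_univ_add, card_filter, card_filter]

lemma exists_monotone_shuffleLead_eq {lead : Fin (ι + m) → Fin (ι + m)}
    (hlead : Function.Injective lead) (h₁ : StrictMono (lead ∘ Fin.castAdd m))
    (h₂ : StrictMono (lead ∘ Fin.natAdd ι)) : ∃ v, Monotone v ∧ shuffleLead v = lead := by
  have hbij := Finite.injective_iff_bijective.1 hlead
  set v : Fin ι → Fin (m + 1) := fun j =>
    ⟨#{k | lead (Fin.natAdd ι k) < lead (Fin.castAdd m j)},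
      Nat.lt_succ_of_le ((card_filter_le _ _).trans_eq (card_fin m))⟩
  have hv : Monotone v := fun j j' h => Fin.mk_le_mk.2 <| card_le_card <|
    monotone_filter_right _ fun k _ (hk : lead _ < _) => hk.trans_le (h₁.monotone h)
  have hlt : ∀ j k, lead (Fin.castAdd m j) < lead (Fin.natAdd ι k) ↔ (v j : ℕ) ≤ k := by
    intro j k
    have hcard := Tuple.lt_card_lt_iff_apply_lt_of_monotone (j := k)
      (a := lead (Fin.castAdd m j)) h₂.monotone
    simp only [Function.comp_apply] at hcard
    change _ ↔ #{k | lead (Fin.natAdd ι k) < lead (Fin.castAdd m j)} ≤ k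
    rw [← not_lt, hcard, not_lt, (hlead.ne (castAdd_lt_natAdd j k).ne).le_iff_lt]
  refine ⟨v, hv, funext fun r => Fin.ext ?_⟩
  rw [val_eq_card_castAdd_add_card_natAdd hbij (lead r)]
  induction r using Fin.addCases with
  | left j =>
    have hj := h₁.card_filter_lt_apply j
    simp only [Function.comp_apply] at hj
    rw [shuffleLead_castAdd, hj]
    rfl
  | right k =>
    have hk := h₂.card_filter_lt_apply k
    simp only [Function.comp_apply] at hk
    simp only [shuffleLead_natAdd, hk, secondLead, hlt]
    ring

end Shuffle

section LeadingOnes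

variable {n R : Type*} [CommRing R]

lemma isUnit_det_of_leading_ones [Fintype n] [LinearOrder n] {A : Matrix n n R}
    {σ : n → n} (hσ : Function.Bijective σ) (hone : ∀ i, A i (σ i) = 1)
    (hzero : ∀ i j, j < σ i → A i j = 0) : IsUnit A.det := by
  let e := Equiv.ofBijective σ hσ
  have htri : (A.submatrix e.symm id).BlockTriangular id := fun a b hab =>
    hzero _ _ (by simpa [e, Equiv.ofBijective_apply_symm_apply] using hab)
  have hdet : (A.submatrix e.symm id).det = 1 := by
    rw [Matrix.det_of_isUpperTriangular htri]
    refine prod_eq_one fun a _ => ?_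
    simpa [e, Equiv.ofBijective_apply_symm_apply] using hone (e.symm a)
  rw [Matrix.det_permute] at hdet
  exact isUnit_of_mul_isUnit_right (hdet ▸ isUnit_one)

lemma leading_ones_unique [Nontrivial R] [LinearOrder n] {A : Matrix n n R} {σ τ : n → n}
    (hσ₁ : ∀ i, A i (σ i) = 1) (hσ₀ : ∀ i j, j < σ i → A i j = 0)
    (hτ₁ : ∀ i, A i (τ i) = 1) (hτ₀ : ∀ i j, j < τ i → A i j = 0) : σ = τ := by
  funext i
  by_contra h
  rcases lt_or_gt_of_ne h with h | h
  · exact one_ne_zero ((hσ₁ i).symm.trans (hτ₀ i _ h))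
  · exact one_ne_zero ((hτ₁ i).symm.trans (hσ₀ i _ h))

lemma eq_of_ne_zero_of_card_le_two [Fintype n] [DecidableEq n] [DecidableEq R]
    {A : Matrix n n R} {c : n} (hcol : #{i | A i c ≠ 0} ≤ 2) {a b d : n} (ha : A a c ≠ 0)
    (hb : A b c ≠ 0) (hd : A d c ≠ 0) (hab : a ≠ b) (had : a ≠ d) : b = d := by
  by_contra hbd
  have : ({a, b, d} : Finset n) ⊆ univ.filter fun i => A i c ≠ 0 := by
    intro i hi
    simp only [mem_insert, mem_singleton] at hi
    rcases hi with rfl | rfl | rfl <;> simpa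
  have := (card_le_card this).trans hcol
  rw [card_eq_three.2 ⟨a, b, d, hab, had, hbd, rfl⟩] at this
  omega

end LeadingOnes

section ShuffleMatrix

variable {ι m : ℕ} {R : Type*} [CommRing R]

def extraRow (v : Fin ι → Fin (m + 1)) (j : Fin ι) (x : Fin (v j)) : Fin (ι + m) :=
  Fin.natAdd ι (Fin.castLE (v j).is_le x)

/- `w j = some x` puts an extra one in the leading column of row `j` of the first block, in row
`ι + x`, which is one of the `v j` rows of the second block leading further left. -/
def shuffleMatrix (v : Fin ι → Fin (m + 1)) (w : ∀ j, Option (Fin (v j))) :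
    Matrix (Fin (ι + m)) (Fin (ι + m)) R :=
  Matrix.of fun r c =>
    if c = shuffleLead v r ∨ ∃ j x, w j = some x ∧ r = extraRow v j x ∧ c = firstLead v j then 1
    else 0

variable {v : Fin ι → Fin (m + 1)} {w : ∀ j, Option (Fin (v j))}

lemma extraRow_injective (v : Fin ι → Fin (m + 1)) (j : Fin ι) :
    Function.Injective (extraRow v j) :=
  fun x y h => by simpa [extraRow, Fin.ext_iff] using h

lemma shuffleLead_extraRow_lt (hv : Monotone v) (j : Fin ι) (x : Fin (v j)) :
    shuffleLead v (extraRow v j x) < firstLead v j := by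
  rw [extraRow, shuffleLead_natAdd, secondLead_lt_firstLead_iff hv]
  exact x.isLt

lemma shuffleMatrix_apply_eq_zero_or_one (r c : Fin (ι + m)) :
    shuffleMatrix (R := R) v w r c = 0 ∨ shuffleMatrix (R := R) v w r c = 1 := by
  rw [shuffleMatrix, Matrix.of_apply]; split_ifs <;> simp

lemma shuffleMatrix_apply_ne_zero_iff [Nontrivial R] {r c : Fin (ι + m)} :
    shuffleMatrix (R := R) v w r c ≠ 0 ↔
      c = shuffleLead v r ∨ ∃ j x, w j = some x ∧ r = extraRow v j x ∧ c = firstLead v j := by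
  rw [shuffleMatrix, Matrix.of_apply]; split_ifs with h <;> simp [h]

lemma shuffleMatrix_apply_shuffleLead (r : Fin (ι + m)) :
    shuffleMatrix (R := R) v w r (shuffleLead v r) = 1 := by
  simp [shuffleMatrix]

lemma shuffleMatrix_apply_eq_zero_of_lt [Nontrivial R] (hv : Monotone v) {r c : Fin (ι + m)}
    (hc : c < shuffleLead v r) : shuffleMatrix (R := R) v w r c = 0 := by
  by_contra h
  rcases shuffleMatrix_apply_ne_zero_iff.1 h with rfl | ⟨j, x, -, rfl, rfl⟩
  · exact lt_irrefl _ hc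
  · exact lt_asymm hc (shuffleLead_extraRow_lt hv j x)

lemma shuffleMatrix_apply_shuffleLead_of_lt [Nontrivial R] (hv : Monotone v)
    {r r' : Fin (ι + m)} (h : r' < r) : shuffleMatrix (R := R) v w r' (shuffleLead v r) = 0 := by
  by_contra hne
  rcases shuffleMatrix_apply_ne_zero_iff.1 hne with hr | ⟨j, x, -, rfl, hj⟩
  · exact h.ne' (shuffleLead_injective hv hr)
  · rw [← shuffleLead_castAdd] at hj
    obtain rfl := shuffleLead_injective hv hj
    exact lt_asymm h (castAdd_lt_natAdd _ _)

lemma card_filter_shuffleMatrix_ne_zero_le_two [Nontrivial R] [DecidableEq R] (hv : Monotone v)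
    (c : Fin (ι + m)) : #{r | shuffleMatrix (R := R) v w r c ≠ 0} ≤ 2 := by
  have hlead : #{r | c = shuffleLead v r} ≤ 1 := card_le_one.2 fun r hr r' hr' =>
    shuffleLead_injective hv ((mem_filter.1 hr).2.symm.trans (mem_filter.1 hr').2)
  have hextra : #{r | ∃ j x, w j = some x ∧ r = extraRow v j x ∧ c = firstLead v j} ≤ 1 := by
    refine card_le_one.2 fun r hr r' hr' => ?_
    obtain ⟨j, x, hx, rfl, rfl⟩ := (mem_filter.1 hr).2
    obtain ⟨j', x', hx', rfl, hj⟩ := (mem_filter.1 hr').2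
    obtain rfl := (firstLead_strictMono hv).injective hj
    rw [Option.some_injective _ (hx.symm.trans hx')]
  simp_rw [shuffleMatrix_apply_ne_zero_iff, filter_or]
  exact (card_union_le _ _).trans (add_le_add hlead hextra)

lemma shuffleMatrix_isIReduced [Nontrivial R] (hv : Monotone v) :
    IsIReduced (ι + m) {ι} (shuffleMatrix (R := R) v w) := by
  refine ⟨isUnit_det_of_leading_ones (shuffleLead_bijective hv) shuffleMatrix_apply_shuffleLead
      fun r c => shuffleMatrix_apply_eq_zero_of_lt hv,
    shuffleLead v, shuffleMatrix_apply_shuffleLead, fun r c hc => ?_,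
    fun r r' => shuffleMatrix_apply_shuffleLead_of_lt hv, (blockwise_strictMono_iff _).2 ⟨?_, ?_⟩⟩
  · rw [shuffleMatrix_apply_eq_zero_of_lt hv hc]
    exact not_isUnit_zero
  · simpa [Function.comp_def] using firstLead_strictMono hv
  · simpa [Function.comp_def] using secondLead_strictMono v

lemma shuffleMatrix_extraRow_firstLead_ne_zero_iff [Nontrivial R] (hv : Monotone v) (j : Fin ι)
    (x : Fin (v j)) :
    shuffleMatrix (R := R) v w (extraRow v j x) (firstLead v j) ≠ 0 ↔ w j = some x := by
  rw [shuffleMatrix_apply_ne_zero_iff]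
  refine ⟨fun h => ?_, fun h => Or.inr ⟨j, x, h, rfl, rfl⟩⟩
  rcases h with h | ⟨j', x', hx', hr, hj⟩
  · exact absurd (shuffleLead_extraRow_lt hv j x) (h ▸ lt_irrefl _)
  · obtain rfl := (firstLead_strictMono hv).injective hj
    rwa [extraRow_injective v j hr]

end ShuffleMatrix

section Decoding

variable {ι m : ℕ} {R : Type*} [CommRing R] {v : Fin ι → Fin (m + 1)}
  {A : Matrix (Fin (ι + m)) (Fin (ι + m)) R}

lemma eq_extraRow_of_ne_zero (hv : Monotone v)
    (hzero : ∀ r c, c < shuffleLead v r → A r c = 0)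
    (habove : ∀ r r', r' < r → A r' (shuffleLead v r) = 0) {r c : Fin (ι + m)} (hA : A r c ≠ 0)
    (hc : c ≠ shuffleLead v r) : ∃ j x, r = extraRow v j x ∧ c = firstLead v j := by
  have hlt : shuffleLead v r < c := lt_of_le_of_ne (not_lt.1 fun h => hA (hzero r c h)) hc.symm
  obtain ⟨i, rfl⟩ := (shuffleLead_bijective hv).2 c
  have hir : i < r := lt_of_le_of_ne (not_lt.1 fun h => hA (habove i r h))
    (fun h => hc (h ▸ rfl))
  induction r using Fin.addCases with
  | left j' =>
    induction i using Fin.addCases with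
    | left j =>
      rw [shuffleLead_castAdd, shuffleLead_castAdd] at hlt
      exact absurd ((firstLead_strictMono hv).lt_iff_lt.1 hlt) (not_lt.2 hir.le)
    | right k => exact absurd hir (not_lt.2 (castAdd_lt_natAdd _ _).le)
  | right k =>
    induction i using Fin.addCases with
    | left j =>
      rw [shuffleLead_castAdd, shuffleLead_natAdd] at hlt
      exact ⟨j, ⟨k, (secondLead_lt_firstLead_iff hv).1 hlt⟩, rfl, shuffleLead_castAdd j⟩
    | right k' =>
      rw [shuffleLead_natAdd, shuffleLead_natAdd] at hlt
      exact absurd ((secondLead_strictMono v).lt_iff_lt.1 hlt) (not_lt.2 (by simpa using hir.le))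

lemma exists_shuffleMatrix_eq_of_shuffleLead [Nontrivial R] [DecidableEq R] (hv : Monotone v)
    (h01 : ∀ r c, A r c = 0 ∨ A r c = 1) (hcol : ∀ c, #{r | A r c ≠ 0} ≤ 2)
    (hone : ∀ r, A r (shuffleLead v r) = 1) (hzero : ∀ r c, c < shuffleLead v r → A r c = 0)
    (habove : ∀ r r', r' < r → A r' (shuffleLead v r) = 0) : ∃ w, shuffleMatrix v w = A := by
  have hcolumn : ∀ j, ∃ o : Option (Fin (v j)),
      ∀ x, A (extraRow v j x) (firstLead v j) ≠ 0 ↔ o = some x := by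
    intro j
    by_cases hex : ∃ x, A (extraRow v j x) (firstLead v j) ≠ 0
    · obtain ⟨x, hx⟩ := hex
      have hlead : A (Fin.castAdd m j) (firstLead v j) ≠ 0 := by
        rw [← shuffleLead_castAdd, hone]; exact one_ne_zero
      refine ⟨some x, fun y => ⟨fun hy => ?_, fun h => Option.some_injective _ h ▸ hx⟩⟩
      exact congrArg some <| extraRow_injective v j <| eq_of_ne_zero_of_card_le_two (hcol _)
        hlead hx hy (castAdd_lt_natAdd _ _).ne (castAdd_lt_natAdd _ _).ne
    · simp only [not_exists, ne_eq, not_not] at hex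
      exact ⟨none, fun x => by simp [hex x]⟩
  choose w hw using hcolumn
  refine ⟨w, Matrix.ext fun r c => ?_⟩
  rcases h01 r c with h | h
  · rw [h, ← not_ne_iff, shuffleMatrix_apply_ne_zero_iff]
    rintro (rfl | ⟨j, x, hx, rfl, rfl⟩)
    · exact one_ne_zero ((hone r).symm.trans h)
    · exact (hw j x).2 hx h
  · rw [h]
    refine (shuffleMatrix_apply_eq_zero_or_one r c).resolve_left fun h0 => ?_
    rw [← not_ne_iff, shuffleMatrix_apply_ne_zero_iff] at h0
    refine h0 (or_iff_not_imp_left.2 fun hc => ?_)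
    obtain ⟨j, x, rfl, rfl⟩ := eq_extraRow_of_ne_zero hv hzero habove (h ▸ one_ne_zero) hc
    exact ⟨j, x, (hw j x).1 (h ▸ one_ne_zero), rfl, rfl⟩

lemma exists_shuffleMatrix_eq [Nontrivial R] [DecidableEq R] (hA : IsIReduced (ι + m) {ι} A)
    (h01 : ∀ r c, A r c = 0 ∨ A r c = 1) (hcol : ∀ c, #{r | A r c ≠ 0} ≤ 2) :
    ∃ v, Monotone v ∧ ∃ w, shuffleMatrix v w = A := by
  obtain ⟨-, lead, hone, hunit, habove, hblock⟩ := hA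
  have hzero : ∀ r c, c < lead r → A r c = 0 := fun r c h =>
    (h01 r c).resolve_right fun h1 => hunit r c h (h1 ▸ isUnit_one)
  have hinj : Function.Injective lead := fun r r' h => by
    by_contra hne
    rcases lt_or_gt_of_ne hne with hlt | hlt
    · exact one_ne_zero ((hone r).symm.trans (h ▸ habove r' r hlt))
    · exact one_ne_zero ((hone r').symm.trans (h ▸ habove r r' hlt))
  obtain ⟨h₁, h₂⟩ := (blockwise_strictMono_iff lead).1 hblock
  obtain ⟨v, hv, rfl⟩ := exists_monotone_shuffleLead_eq hinj h₁ h₂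
  exact ⟨v, hv, exists_shuffleMatrix_eq_of_shuffleLead hv h01 hcol hone hzero habove⟩

end Decoding

section Counting

variable {ι m : ℕ}

abbrev ShuffleData (ι m : ℕ) :=
  Σ v : {v : Fin ι → Fin (m + 1) // Monotone v}, ∀ j, Option (Fin (v.1 j))

lemma shuffleMatrix_injective (R : Type*) [CommRing R] [Nontrivial R] :
    Function.Injective fun p : ShuffleData ι m => shuffleMatrix (R := R) p.1.1 p.2 := by
  rintro ⟨⟨v, hv⟩, w⟩ ⟨⟨v', hv'⟩, w'⟩ h
  simp only at h
  have hlead : shuffleLead v = shuffleLead v' := leading_ones_unique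
    (shuffleMatrix_apply_shuffleLead (w := w)) (fun _ _ => shuffleMatrix_apply_eq_zero_of_lt hv)
    (fun r => by rw [h]; exact shuffleMatrix_apply_shuffleLead r)
    (fun _ _ hc => by rw [h]; exact shuffleMatrix_apply_eq_zero_of_lt hv' hc)
  obtain rfl : v = v' := funext fun j => by
    simpa [shuffleLead_castAdd, firstLead, Fin.ext_iff] using congrFun hlead (Fin.castAdd m j)
  obtain rfl : w = w' := funext fun j => Option.ext fun x => by
    rw [← shuffleMatrix_extraRow_firstLead_ne_zero_iff (R := R) hv, h,
      shuffleMatrix_extraRow_firstLead_ne_zero_iff hv]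
  rfl

lemma card_shuffleData : Fintype.card (ShuffleData ι m) =
    ∑ v : {v : Fin ι → Fin (m + 1) // Monotone v}, ∏ j, ((v.1 j : ℕ) + 1) := by
  simp [Fintype.card_sigma, Fintype.card_pi]

lemma card_isIReduced_zeroOne_eq_card_shuffleData (R : Type*) [CommRing R] [Nontrivial R]
    [DecidableEq R] :
    Nat.card {A : Matrix (Fin (ι + m)) (Fin (ι + m)) R //
        IsIReduced (ι + m) {ι} A ∧ (∀ i j, A i j = 0 ∨ A i j = 1) ∧
        ∀ j, (Finset.univ.filter fun i => A i j ≠ 0).card ≤ 2} =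
      Fintype.card (ShuffleData ι m) := by
  rw [← Nat.card_eq_fintype_card]
  refine (Nat.card_eq_of_bijective (fun p => ⟨shuffleMatrix p.1.1 p.2,
    shuffleMatrix_isIReduced p.1.2, shuffleMatrix_apply_eq_zero_or_one,
    card_filter_shuffleMatrix_ne_zero_le_two p.1.2⟩)
    ⟨fun p q h => shuffleMatrix_injective R (congrArg Subtype.val h), ?_⟩).symm
  rintro ⟨A, hA, h01, hcol⟩
  obtain ⟨v, hv, w, rfl⟩ := exists_shuffleMatrix_eq hA h01 hcol
  exact ⟨⟨⟨v, hv⟩, w⟩, rfl⟩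

end Counting

theorem stmt_4_general (F : Type*) [Field F] [DecidableEq F] (n ι : ℕ) (h2 : ι ≤ n - 1) :
    Nat.card {A : Matrix (Fin n) (Fin n) F //
        IsIReduced n {ι} A ∧ (∀ i j, A i j = 0 ∨ A i j = 1) ∧
        ∀ j, (Finset.univ.filter fun i => A i j ≠ 0).card ≤ 2}
      = ∑ t ∈ Finset.Nat.antidiagonalTuple (n - ι + 1) ι,
          ∏ i : Fin (n - ι + 1), ((i : ℕ) + 1) ^ t i := by
  obtain ⟨m, rfl⟩ : ∃ m, n = ι + m := ⟨n - ι, by omega⟩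
  rw [Nat.add_sub_cancel_left, card_isIReduced_zeroOne_eq_card_shuffleData, card_shuffleData]
  exact sum_monotone_prod_eq_sum_antidiagonalTuple (fun i : Fin (m + 1) => (i : ℕ) + 1)

/-- For `1 ≤ ι ≤ n − 1` and `I = {ι}`, the number of `I`-reduced matrices in `GL_n(𝔽_q)`
whose entries are all `0` or `1` and with at most two nonzero entries per column equals
the coefficient of `z^ι` in `∏_{i=1}^{n−ι+1} 1/(1 − i z)`, i.e. the sum over all tuples
`(t₁,…,t_{n−ι+1})` of nonnegative integers with `t₁ + ⋯ + t_{n−ι+1} = ι` of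
`1^{t₁}·2^{t₂}·⋯·(n−ι+1)^{t_{n−ι+1}}`. -/
theorem stmt_4 (F : Type*) [Field F] [Fintype F] [DecidableEq F] (q n ι : ℕ)
    (hq : Fintype.card F = q) (hn : 2 ≤ n) (h1 : 1 ≤ ι) (h2 : ι ≤ n - 1) :
    Nat.card {A : Matrix (Fin n) (Fin n) F //
        IsIReduced n {ι} A ∧ (∀ i j, A i j = 0 ∨ A i j = 1) ∧
        ∀ j, (Finset.univ.filter fun i => A i j ≠ 0).card ≤ 2}
      = ∑ t ∈ Finset.Nat.antidiagonalTuple (n - ι + 1) ι,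
          ∏ i : Fin (n - ι + 1), ((i : ℕ) + 1) ^ t i :=
  stmt_4_general F n ι h2
end

section
/- lim_{n→∞} (1/n)·max_{1 ≤ ι ≤ n−1} ι(n−ι)/(n+ι) = 3 − 2√2. -/
open Filter Real Topology

/-- With `M(n) := max_{1 ≤ ι ≤ n−1} ι(n−ι)/(n+ι)` for `n ≥ 2`, the sequence `M(n)/n`
converges to `3 − 2√2` as `n → ∞`. -/
theorem stmt_9 :
    Filter.Tendsto
      (fun n : ℕ =>
        if h : 2 ≤ n then
          ((Finset.Icc 1 (n - 1)).sup'
              ⟨1, Finset.mem_Icc.mpr ⟨le_rfl, by omega⟩⟩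
              (fun ι => ((ι * (n - ι) : ℕ) : ℝ) / ((n + ι : ℕ) : ℝ))) / (n : ℝ)
        else 0)
      Filter.atTop (nhds (3 - 2 * Real.sqrt 2)) := by
  have s2 : Real.sqrt 2 ^ 2 = 2 := Real.sq_sqrt (by norm_num)
  have s0 : (0:ℝ) ≤ Real.sqrt 2 := Real.sqrt_nonneg 2
  set c : ℝ := Real.sqrt 2 - 1 with hc
  have hc0 : 0 < c := by nlinarith [sq_nonneg (Real.sqrt 2 - 1)]
  have hc1 : c < 1 := by nlinarith [sq_nonneg (Real.sqrt 2 - 2)]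
  have hx : Tendsto (fun n : ℕ => (⌊c * n⌋₊ : ℝ) / n) atTop (𝓝 c) :=
    (tendsto_nat_floor_mul_div_atTop hc0.le).comp tendsto_natCast_atTop_atTop
  -- The lower-bound sequence
  have hL : Tendsto (fun n : ℕ =>
      ((⌊c*n⌋₊ * (n - ⌊c*n⌋₊) : ℕ) : ℝ) / ((n + ⌊c*n⌋₊ : ℕ) : ℝ) / n)
      atTop (𝓝 (3 - 2 * Real.sqrt 2)) := by
    have h1 : Tendsto (fun n : ℕ =>
        ((⌊c*n⌋₊:ℝ)/n) * (1 - (⌊c*n⌋₊:ℝ)/n) / (1 + (⌊c*n⌋₊:ℝ)/n)) atTop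
        (𝓝 (c * (1 - c) / (1 + c))) :=
      (hx.mul (tendsto_const_nhds.sub hx)).div (tendsto_const_nhds.add hx) (by nlinarith)
    have heq : c * (1 - c) / (1 + c) = 3 - 2 * Real.sqrt 2 := by
      rw [div_eq_iff (by nlinarith : (1:ℝ) + c ≠ 0)]; nlinarith
    rw [heq] at h1
    apply h1.congr'
    filter_upwards [eventually_ge_atTop 1] with n hn
    have hn0 : (0:ℝ) < n := by exact_mod_cast Nat.lt_of_lt_of_le Nat.zero_lt_one hn
    have hkn : ⌊c*n⌋₊ ≤ n := by
      have h2 : c * n ≤ (n:ℝ) := by nlinarith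
      have := Nat.floor_le_floor h2
      simpa using this
    have hk0 : (0:ℝ) ≤ (⌊c*n⌋₊:ℝ) := Nat.cast_nonneg _
    have hnk : (0:ℝ) < (n:ℝ) + (⌊c*n⌋₊:ℝ) := by positivity
    push_cast [hkn]
    field_simp
  apply tendsto_of_tendsto_of_tendsto_of_le_of_le' hL tendsto_const_nhds
  · -- lower bound eventually
    filter_upwards [eventually_ge_atTop 3] with n hn
    rw [dif_pos (by omega : 2 ≤ n)]
    have hn0 : (0:ℝ) < n := by exact_mod_cast (by omega : 0 < n)
    have hn3 : (3:ℝ) ≤ n := by exact_mod_cast hn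
    have hk1 : 1 ≤ ⌊c*n⌋₊ := Nat.le_floor (by push_cast; nlinarith)
    have hklt : ⌊c*n⌋₊ < n := by
      rw [Nat.floor_lt (by positivity)]
      nlinarith
    have hmem : ⌊c*n⌋₊ ∈ Finset.Icc 1 (n-1) := Finset.mem_Icc.mpr ⟨hk1, by omega⟩
    have hle := Finset.le_sup' (fun ι => ((ι * (n - ι) : ℕ) : ℝ) / ((n + ι : ℕ) : ℝ)) hmem
    exact div_le_div_of_nonneg_right hle hn0.le
  · -- upper bound eventually
    filter_upwards [eventually_ge_atTop 2] with n hn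
    rw [dif_pos hn]
    have hn0 : (0:ℝ) < n := by exact_mod_cast Nat.lt_of_lt_of_le Nat.zero_lt_two hn
    rw [div_le_iff₀ hn0]
    apply Finset.sup'_le
    intro ι hι
    obtain ⟨h1, h2⟩ := Finset.mem_Icc.mp hι
    have hιn : ι ≤ n := by omega
    have ha : (ι:ℝ) ≤ n := by exact_mod_cast hιn
    have ha0 : (0:ℝ) ≤ (ι:ℝ) := Nat.cast_nonneg _
    push_cast [hιn]
    rw [div_le_iff₀ (by positivity)]
    nlinarith [sq_nonneg ((ι:ℝ) - (Real.sqrt 2 - 1) * n), sq_nonneg ((n:ℝ)), sq_nonneg ((ι:ℝ))]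
end

section
/- ∑_{α,β,γ ∈ 𝔽_q} τ_{α,β,γ} · [β² − β − α(γ² − γ) = 0] = q² + 8q + 1, where τ_{α,β,γ} = 1 if αγ ≠ 0; τ = 2 if exactly one of α, γ is zero and β ≠ 0; τ = 3 if exactly one of α, β, γ is nonzero; and τ = 6 if α = β = γ = 0. (The bracket is 1 if the equation holds in 𝔽_q and 0 otherwise.) -/
/-- `τ_{α,β,γ}`: equals `1` if `αγ ≠ 0`; `2` if exactly one of `α, γ` is zero and `β ≠ 0`;
`3` if exactly one of `α, β, γ` is nonzero; `6` if `α = β = γ = 0`. -/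
def tau {F : Type*} [Zero F] [DecidableEq F] (α β γ : F) : ℕ :=
  if α ≠ 0 ∧ γ ≠ 0 then 1
  else if ((α = 0 ∧ γ ≠ 0) ∨ (α ≠ 0 ∧ γ = 0)) ∧ β ≠ 0 then 2
  else if (α ≠ 0 ∧ β = 0 ∧ γ = 0) ∨ (α = 0 ∧ β ≠ 0 ∧ γ = 0) ∨
          (α = 0 ∧ β = 0 ∧ γ ≠ 0) then 3
  else 6

open Finset

section Aux
variable {F : Type*} [Field F] [Fintype F] [DecidableEq F]

/-- indicator of being zero -/
def Z {F : Type*} [Zero F] [DecidableEq F] (x : F) : ℕ := if x = 0 then 1 else 0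

lemma tau_eq (α β γ : F) :
    tau α β γ = 1 + Z α + Z γ + Z α * Z β + Z γ * Z β + Z α * Z β * Z γ := by
  rcases eq_or_ne α 0 with ha | ha <;> rcases eq_or_ne β 0 with hb | hb <;>
    rcases eq_or_ne γ 0 with hc | hc <;> simp [tau, Z, ha, hb, hc]

lemma quad_filter : (univ.filter fun β : F => β ^ 2 - β = 0) = {0, 1} := by
  ext β
  have h : β ^ 2 - β = β * (β - 1) := by ring
  rw [Finset.mem_filter, h, mul_eq_zero, sub_eq_zero]
  simp

lemma quad_card : (univ.filter fun β : F => β ^ 2 - β = 0).card = 2 := by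
  rw [quad_filter]; simp

lemma quad_sum : ∑ β : F, (if β ^ 2 - β = 0 then (1 : ℕ) else 0) = 2 := by
  rw [← Finset.card_filter, quad_filter]
  simp

lemma innerSumM (q : ℕ) (hq : Fintype.card F = q) (β γ : F) :
    ∑ α : F, (if β ^ 2 - β - α * (γ ^ 2 - γ) = 0 then (1 : ℕ) else 0)
      = if γ ^ 2 - γ = 0 then (if β ^ 2 - β = 0 then q else 0) else 1 := by
  by_cases h : γ ^ 2 - γ = 0
  · simp [h, hq, Finset.card_univ]
  · have key : ∀ α : F, (β ^ 2 - β - α * (γ ^ 2 - γ) = 0) ↔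
        α = (β ^ 2 - β) / (γ ^ 2 - γ) := by
      intro α
      rw [sub_eq_zero, eq_comm, eq_div_iff h, eq_comm]
    simp_rw [key, h]
    simp [Finset.sum_ite_eq']

lemma L1 (q : ℕ) (hq : Fintype.card F = q) :
    ∑ α : F, ∑ β : F, ∑ γ : F,
        (if β ^ 2 - β - α * (γ ^ 2 - γ) = 0 then (1 : ℕ) else 0) = q ^ 2 + 2 * q := by
  have swap : ∑ α : F, ∑ β : F, ∑ γ : F,
        (if β ^ 2 - β - α * (γ ^ 2 - γ) = 0 then (1 : ℕ) else 0)
      = ∑ β : F, ∑ γ : F, ∑ α : F,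
        (if β ^ 2 - β - α * (γ ^ 2 - γ) = 0 then (1 : ℕ) else 0) := by
    rw [Finset.sum_comm]
    exact Finset.sum_congr rfl fun β _ => Finset.sum_comm
  rw [swap]
  simp_rw [innerSumM q hq]
  rw [Finset.sum_comm]
  have step : ∀ γ : F, ∑ β : F,
      (if γ ^ 2 - γ = 0 then (if β ^ 2 - β = 0 then q else 0) else 1)
        = q + (if γ ^ 2 - γ = 0 then q else 0) := by
    intro γ
    by_cases h : γ ^ 2 - γ = 0
    · simp only [h, if_true]
      have : ∀ β : F, (if β ^ 2 - β = 0 then q else 0)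
          = q * (if β ^ 2 - β = 0 then 1 else 0) := by
        intro β; split <;> simp
      simp_rw [this, ← Finset.mul_sum, quad_sum]
      omega
    · simp [h, Finset.card_univ, hq]
  simp_rw [step, Finset.sum_add_distrib, Finset.sum_const, Finset.card_univ, hq,
    smul_eq_mul]
  have : ∀ γ : F, (if γ ^ 2 - γ = 0 then q else 0)
      = q * (if γ ^ 2 - γ = 0 then 1 else 0) := by intro γ; split <;> simp
  simp_rw [this, ← Finset.mul_sum, quad_sum]
  ring

lemma L2 (q : ℕ) (hq : Fintype.card F = q) :
    ∑ α : F, ∑ β : F, ∑ γ : F,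
        Z α * (if β ^ 2 - β - α * (γ ^ 2 - γ) = 0 then (1 : ℕ) else 0) = 2 * q := by
  rw [Finset.sum_eq_single 0]
  · simp only [Z, if_pos rfl, one_mul, zero_mul, sub_zero, mul_zero]
    simp_rw [Finset.sum_const, Finset.card_univ, hq, smul_eq_mul,
      ← Finset.mul_sum, quad_sum]
    simp [Nat.mul_comm]
  · intro α _ hα; simp [Z, hα]
  · simp

lemma L3 (q : ℕ) (hq : Fintype.card F = q) :
    ∑ α : F, ∑ β : F, ∑ γ : F,
        Z γ * (if β ^ 2 - β - α * (γ ^ 2 - γ) = 0 then (1 : ℕ) else 0) = 2 * q := by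
  simp only [Z, ite_mul, one_mul, zero_mul]
  simp only [Finset.sum_ite_eq', Finset.mem_univ, if_true]
  norm_num
  rw [hq, quad_card]
  ring

lemma L4 (q : ℕ) (hq : Fintype.card F = q) :
    ∑ α : F, ∑ β : F, ∑ γ : F,
        Z α * Z β * (if β ^ 2 - β - α * (γ ^ 2 - γ) = 0 then (1 : ℕ) else 0) = q := by
  rw [Finset.sum_eq_single 0]
  · rw [Finset.sum_eq_single 0]
    · simp [Z, Finset.card_univ, hq]
    · intro β _ hβ; simp [Z, hβ]
    · simp
  · intro α _ hα; simp [Z, hα]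
  · simp

lemma L5 (q : ℕ) (hq : Fintype.card F = q) :
    ∑ α : F, ∑ β : F, ∑ γ : F,
        Z γ * Z β * (if β ^ 2 - β - α * (γ ^ 2 - γ) = 0 then (1 : ℕ) else 0) = q := by
  have step : ∀ α : F, ∑ β : F, ∑ γ : F,
      Z γ * Z β * (if β ^ 2 - β - α * (γ ^ 2 - γ) = 0 then (1 : ℕ) else 0) = 1 := by
    intro α
    rw [Finset.sum_eq_single 0]
    · rw [Finset.sum_eq_single 0]
      · simp [Z]
      · intro γ _ hγ; simp [Z, hγ]
      · simp
    · intro β _ hβ; simp [Z, hβ]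
    · simp
  simp_rw [step, Finset.sum_const, Finset.card_univ, hq, smul_eq_mul, mul_one]

lemma L6 (q : ℕ) (hq : Fintype.card F = q) :
    ∑ α : F, ∑ β : F, ∑ γ : F,
        Z α * Z β * Z γ * (if β ^ 2 - β - α * (γ ^ 2 - γ) = 0 then (1 : ℕ) else 0) = 1 := by
  rw [Finset.sum_eq_single 0]
  · rw [Finset.sum_eq_single 0]
    · rw [Finset.sum_eq_single 0]
      · simp [Z]
      · intro γ _ hγ; simp [Z, hγ]
      · simp
    · intro β _ hβ; simp [Z, hβ]
    · simp
  · intro α _ hα; simp [Z, hα]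
  · simp

end Aux

/-- `∑_{α,β,γ ∈ 𝔽_q} τ_{α,β,γ} · [β² − β − α(γ² − γ) = 0] = q² + 8q + 1`. -/
theorem stmt_13 (F : Type*) [Field F] [Fintype F] [DecidableEq F] (q : ℕ)
    (hq : Fintype.card F = q) :
    (∑ α : F, ∑ β : F, ∑ γ : F,
        tau α β γ * (if β ^ 2 - β - α * (γ ^ 2 - γ) = 0 then 1 else 0))
      = q ^ 2 + 8 * q + 1 := by
  simp_rw [tau_eq, add_mul, one_mul, Finset.sum_add_distrib]
  rw [L1 q hq, L2 q hq, L3 q hq, L4 q hq, L5 q hq, L6 q hq]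
  ring
end

section
/- The set {1,2}-reduced matrices in GL₃(𝔽_q): for a lower unitriangular matrix E with below-diagonal entries (α, β, γ) (positions (2,1), (3,1), (3,2)), the number τ_{α,β,γ} of permutations σ ∈ S₃ such that the column-permuted matrix Eσ is {1,2}-reduced equals: 1 if αγ ≠ 0; 2 if exactly one of α, γ is zero and β ≠ 0; 3 if exactly one of α, β, γ is nonzero; 6 if α = β = γ = 0. -/
/-!
For a lower unitriangular `L`, the diagonal `1` of row `i` sits in column `σ⁻¹ i` of `Lσ`, and it
is the only possible leading `1` of that row: every column `σ⁻¹ k` with `k < i` carries the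
diagonal `1` of row `k` above it. So `Lσ` is reduced exactly when each nonzero entry `L i j`
(`j < i`) lies to the right of the leading `1` of its row, i.e. `σ⁻¹ i < σ⁻¹ j`; the condition
inside blocks is vacuous since `{1, 2}` separates all rows. For `n = 3` this leaves counting the
orderings of `{0, 1, 2}` respecting the relations `1 ≺ 0`, `2 ≺ 0`, `2 ≺ 1` attached to the
nonzero ones among `α, β, γ`.
-/

namespace Matrix

variable {R : Type*} [CommRing R] {n : ℕ} {L : Matrix (Fin n) (Fin n) R}

theorem isUnit_det_submatrix_id_perm_of_isLowerTriangular (hL : L.IsLowerTriangular)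
    (hdiag : ∀ i, L i i = 1) (σ : Equiv.Perm (Fin n)) : IsUnit (L.submatrix id σ).det := by
  rw [det_permute', det_of_isLowerTriangular L hL, Finset.prod_eq_one fun i _ => hdiag i, mul_one]
  exact (Equiv.Perm.sign σ).isUnit.map (Int.castRingHom R)

variable [Nontrivial R]

theorem lead_eq_perm_inv_of_isLowerTriangular (hL : L.IsLowerTriangular)
    (hdiag : ∀ i, L i i = 1) {σ : Equiv.Perm (Fin n)} {lead : Fin n → Fin n}
    (hone : ∀ i, L i (σ (lead i)) = 1) (habove : ∀ i i', i' < i → L i' (σ (lead i)) = 0)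
    (i : Fin n) : lead i = σ⁻¹ i := by
  rw [Equiv.Perm.eq_inv_iff_eq]
  rcases lt_trichotomy (σ (lead i)) i with h | h | h
  · simpa [hdiag] using habove i _ h
  · exact h
  · exact absurd ((hL h).symm.trans (hone i)) zero_ne_one

theorem isIReduced_submatrix_id_perm_iff (hL : L.IsLowerTriangular) (hdiag : ∀ i, L i i = 1)
    {I : Finset ℕ} (hI : ∀ i i' : Fin n, i < i' → ∃ ι ∈ I, (i : ℕ) < ι ∧ ι ≤ i')
    (σ : Equiv.Perm (Fin n)) :
    IsIReduced n I (L.submatrix id σ) ↔ ∀ i j, j < i → IsUnit (L i j) → σ⁻¹ i < σ⁻¹ j := by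
  constructor
  · rintro ⟨-, lead, hone, hleft, habove, -⟩ i j hji hunit
    have hlead := lead_eq_perm_inv_of_isLowerTriangular hL hdiag hone habove
    refine lt_of_le_of_ne ?_ (σ⁻¹.injective.ne hji.ne')
    refine le_of_not_gt fun hlt => hleft i (σ⁻¹ j) (hlead i ▸ hlt) ?_
    simpa using hunit
  · intro h
    refine ⟨isUnit_det_submatrix_id_perm_of_isLowerTriangular hL hdiag σ, ⇑σ⁻¹, ?_, ?_, ?_, ?_⟩
    · simp [hdiag]
    · intro i c hc hunit
      rcases lt_trichotomy (σ c) i with hci | hci | hci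
      · have := h i (σ c) hci hunit
        simp only [Equiv.Perm.coe_inv, Equiv.symm_apply_apply] at this
        exact (hc.trans this).false
      · simp [← hci] at hc
      · have hzero : L i (σ c) = 0 := hL hci
        rw [submatrix_apply, id, hzero] at hunit
        exact not_isUnit_zero hunit
    · intro i i' hi
      simpa using hL hi
    · intro i i' hi hsame
      obtain ⟨ι, hι, hiι, hιi'⟩ := hI i i' hi
      exact absurd ((hsame ι hι).mp hiι) hιi'.not_gt

end Matrix

theorem forall_lt_isUnit_imp_iff_fin_three {F : Type*} [GroupWithZero F] (α β γ : F)
    (τ : Fin 3 → Fin 3) :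
    (∀ i j, j < i → IsUnit (!![1, 0, 0; α, 1, 0; β, γ, 1] i j) → τ i < τ j) ↔
      (α ≠ 0 → τ 1 < τ 0) ∧ (β ≠ 0 → τ 2 < τ 0) ∧ (γ ≠ 0 → τ 2 < τ 1) := by
  simp [Fin.forall_fin_succ, isUnit_iff_ne_zero]

theorem isLowerTriangular_fin_three {R : Type*} [Zero R] [One R] (α β γ : R) :
    (!![1, 0, 0; α, 1, 0; β, γ, 1]).IsLowerTriangular := by
  intro i j h
  fin_cases i <;> fin_cases j <;> first | rfl | exact absurd h (by decide)

theorem card_perm_fin_three (a b c : Prop) [Decidable a] [Decidable b] [Decidable c] :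
    Nat.card {σ : Equiv.Perm (Fin 3) //
        (a → σ⁻¹ 1 < σ⁻¹ 0) ∧ (b → σ⁻¹ 2 < σ⁻¹ 0) ∧ (c → σ⁻¹ 2 < σ⁻¹ 1)}
      = if a ∧ c then 1
        else if ((¬a ∧ c) ∨ (a ∧ ¬c)) ∧ b then 2
        else if (a ∧ ¬b ∧ ¬c) ∨ (¬a ∧ b ∧ ¬c) ∨ (¬a ∧ ¬b ∧ c) then 3
        else 6 := by
  rw [Nat.card_eq_fintype_card]
  by_cases ha : a <;> by_cases hb : b <;> by_cases hc : c <;> simp only [ha, hb, hc] <;> decide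

/-- For the lower unitriangular matrix `E = [[1,0,0],[α,1,0],[β,γ,1]]`, the number of
permutations `σ ∈ S₃` such that the column-permuted matrix `Eσ` is `{1,2}`-reduced equals:
`1` if `αγ ≠ 0`; `2` if exactly one of `α, γ` is zero and `β ≠ 0`; `3` if exactly one of
`α, β, γ` is nonzero; `6` if `α = β = γ = 0`. -/
theorem stmt_16 (F : Type*) [Field F] [DecidableEq F] (α β γ : F) :
    Nat.card {σ : Equiv.Perm (Fin 3) //
        IsIReduced 3 ({1, 2} : Finset ℕ)
          ((!![1, 0, 0; α, 1, 0; β, γ, 1]).submatrix id σ)}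
      = if α ≠ 0 ∧ γ ≠ 0 then 1
        else if ((α = 0 ∧ γ ≠ 0) ∨ (α ≠ 0 ∧ γ = 0)) ∧ β ≠ 0 then 2
        else if (α ≠ 0 ∧ β = 0 ∧ γ = 0) ∨ (α = 0 ∧ β ≠ 0 ∧ γ = 0) ∨
                (α = 0 ∧ β = 0 ∧ γ ≠ 0) then 3
        else 6 := by
  have hdiag : ∀ i, (!![1, 0, 0; α, 1, 0; β, γ, 1] : Matrix (Fin 3) (Fin 3) F) i i = 1 := by
    intro i; fin_cases i <;> rfl
  have hI : ∀ i i' : Fin 3, i < i' → ∃ ι ∈ ({1, 2} : Finset ℕ), (i : ℕ) < ι ∧ ι ≤ i' := by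
    decide
  have hreduced (σ : Equiv.Perm (Fin 3)) := (Matrix.isIReduced_submatrix_id_perm_iff
    (isLowerTriangular_fin_three α β γ) hdiag hI σ).trans
      (forall_lt_isUnit_imp_iff_fin_three α β γ _)
  rw [Nat.card_congr (Equiv.subtypeEquivRight hreduced), card_perm_fin_three]
  simp only [not_not]
end
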